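/- For real α₁, α₂, α₃, the eigenvalues of the matrix A = α₁λ₁ + α₂λ₄ + α₃λ₇ ∈ su(4) are (−i/2)(α₁+α₂+α₃), (i/2)(α₁+α₂−α₃), (i/2)(α₁−α₂+α₃), (i/2)(−α₁+α₂+α₃); consequently all eigenvalues of A have imaginary part of absolute value < π if and only if (α₁,α₂,α₃) lies in the open regular octahedron {|α₁+α₂+α₃| < 2π, |α₁+α₂−α₃| < 2π, |α₁−α₂+α₃| < 2π, |−α₁+α₂+α₃| < 2π}. -/

import Mathlib

/-!
The matrices `σ₁ ⊗ I`, `I ⊗ σ₁` and `σ₁ ⊗ σ₁` commute and are simultaneously diagonalised by a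
`4 × 4` Hadamard matrix `P`, with sign patterns `(1,-1,-1,1)`, `(1,-1,1,-1)` and `(1,1,-1,-1)`.
Hence `A * P = P * D` with `D` diagonal, its entries being `-(i/2)` times the corresponding signed
sums of the `αᵢ`, and `A` has the spectrum of `D`. Each eigenvalue is `±(i/2)` times a real signed
sum, so its imaginary part has absolute value half that of the sum.
-/

open Matrix Complex

noncomputable section

def σ1 : Matrix (Fin 2) (Fin 2) ℂ := !![0, 1; 1, 0]
def σ2 : Matrix (Fin 2) (Fin 2) ℂ := !![0, -I; I, 0]
def σ3 : Matrix (Fin 2) (Fin 2) ℂ := !![1, 0; 0, -1]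

/-- `pauli 0 = I₂`, `pauli i = σᵢ` for `i = 1, 2, 3`. -/
def pauli : Fin 4 → Matrix (Fin 2) (Fin 2) ℂ := ![1, σ1, σ2, σ3]

/-- Kronecker (tensor) product of two `2 × 2` matrices, as a `4 × 4` matrix
(row-major convention). -/
def kron (A B : Matrix (Fin 2) (Fin 2) ℂ) : Matrix (Fin 4) (Fin 4) ℂ :=
  Matrix.of fun i j =>
    A ⟨i.val / 2, by have := i.isLt; omega⟩ ⟨j.val / 2, by have := j.isLt; omega⟩ *
    B ⟨i.val % 2, by have := i.isLt; omega⟩ ⟨j.val % 2, by have := j.isLt; omega⟩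

/-- `σ_{μν} = (1/(2i)) σ_μ ⊗ σ_ν`. -/
def sig (μ ν : Fin 4) : Matrix (Fin 4) (Fin 4) ℂ :=
  (1 / (2 * I)) • kron (pauli μ) (pauli ν)

/-- The Fano basis `λ_1, …, λ_15` of `su(4)`, so that `fano (k-1) = λ_k`. -/
def fano : Fin 15 → Matrix (Fin 4) (Fin 4) ℂ :=
  ![sig 1 0, sig 2 0, sig 3 0, sig 0 1, sig 0 2, sig 0 3, sig 1 1, sig 1 2,
    sig 1 3, sig 2 1, sig 2 2, sig 2 3, sig 3 1, sig 3 2, sig 3 3]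

theorem spectrum_eq_of_mul_eq_mul_of_mul_eq_one {R A : Type*} [CommSemiring R] [Ring A]
    [Algebra R A] [IsDedekindFiniteMonoid A] {a d p q : A} (hpq : p * q = 1)
    (hap : a * p = p * d) : spectrum R a = spectrum R d := by
  let u : Aˣ := ⟨p, q, hpq, mul_eq_one_comm.mp hpq⟩
  have : a = u * d * u⁻¹ := by
    simp only [u, Units.inv_mk, ← hap, mul_assoc, hpq, mul_one]
  rw [this, spectrum.units_conjugate]

lemma one_div_two_mul_I : (1 / (2 * I) : ℂ) = -(I / 2) := by
  rw [div_eq_iff (by simp)]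
  linear_combination I_mul_I

lemma sig_eq_neg_I_div_two_smul (μ ν : Fin 4) :
    sig μ ν = -(I / 2) • kron (pauli μ) (pauli ν) := by
  rw [sig, one_div_two_mul_I]

def hadamard4 : Matrix (Fin 4) (Fin 4) ℂ :=
  !![1, 1, 1, 1; 1, -1, 1, -1; 1, -1, -1, 1; 1, 1, -1, -1]

lemma hadamard4_mul_smul_transpose : hadamard4 * ((1 / 4 : ℂ) • hadamard4ᵀ) = 1 := by
  ext i j
  fin_cases i <;> fin_cases j <;>
    simp [hadamard4, Matrix.mul_apply, Fin.sum_univ_four] <;> norm_num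

lemma kron_σ1_one_mul_hadamard4 :
    kron σ1 1 * hadamard4 = hadamard4 * diagonal ![1, -1, -1, 1] := by
  ext i j
  fin_cases i <;> fin_cases j <;>
    simp [kron, σ1, hadamard4, Matrix.mul_apply, Fin.sum_univ_four, one_apply]

lemma kron_one_σ1_mul_hadamard4 :
    kron 1 σ1 * hadamard4 = hadamard4 * diagonal ![1, -1, 1, -1] := by
  ext i j
  fin_cases i <;> fin_cases j <;>
    simp [kron, σ1, hadamard4, Matrix.mul_apply, Fin.sum_univ_four, one_apply]

lemma kron_σ1_σ1_mul_hadamard4 :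
    kron σ1 σ1 * hadamard4 = hadamard4 * diagonal ![1, 1, -1, -1] := by
  ext i j
  fin_cases i <;> fin_cases j <;>
    simp [kron, σ1, hadamard4, Matrix.mul_apply, Fin.sum_univ_four]

lemma fano_combination_mul_hadamard4 (α₁ α₂ α₃ : ℝ) :
    ((α₁ : ℂ) • fano 0 + (α₂ : ℂ) • fano 3 + (α₃ : ℂ) • fano 6) * hadamard4 =
      hadamard4 * diagonal ![(-(I / 2)) * (α₁ + α₂ + α₃), (I / 2) * (α₁ + α₂ - α₃),
        (I / 2) * (α₁ - α₂ + α₃), (I / 2) * (-α₁ + α₂ + α₃)] := by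
  have h0 : fano 0 = -(I / 2) • kron σ1 1 := sig_eq_neg_I_div_two_smul 1 0
  have h3 : fano 3 = -(I / 2) • kron 1 σ1 := sig_eq_neg_I_div_two_smul 0 1
  have h6 : fano 6 = -(I / 2) • kron σ1 σ1 := sig_eq_neg_I_div_two_smul 1 1
  simp only [h0, h3, h6, add_mul, smul_mul_assoc, kron_σ1_one_mul_hadamard4,
    kron_one_σ1_mul_hadamard4, kron_σ1_σ1_mul_hadamard4, ← mul_smul_comm, ← mul_add,
    ← diagonal_smul, diagonal_add]
  congr 2
  ext i
  fin_cases i <;> simp <;> ring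

lemma spectrum_fano_combination (α₁ α₂ α₃ : ℝ) :
    spectrum ℂ ((α₁ : ℂ) • fano 0 + (α₂ : ℂ) • fano 3 + (α₃ : ℂ) • fano 6) =
      {(-(I / 2)) * (α₁ + α₂ + α₃), (I / 2) * (α₁ + α₂ - α₃),
        (I / 2) * (α₁ - α₂ + α₃), (I / 2) * (-α₁ + α₂ + α₃)} := by
  rw [spectrum_eq_of_mul_eq_mul_of_mul_eq_one hadamard4_mul_smul_transpose
    (fano_combination_mul_hadamard4 α₁ α₂ α₃), spectrum_diagonal]
  simp only [Matrix.range_cons, Matrix.range_empty, Set.union_empty, Set.singleton_union]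

/-- the eigenvalues of `A = α₁λ₁ + α₂λ₄ + α₃λ₇` are
`(-i/2)(α₁+α₂+α₃), (i/2)(α₁+α₂-α₃), (i/2)(α₁-α₂+α₃), (i/2)(-α₁+α₂+α₃)`;
consequently all eigenvalues have `|Im| < π` iff `(α₁,α₂,α₃)` lies in the open
regular octahedron with the four constraints `|±α₁ ± α₂ ± α₃| < 2π`. -/
theorem spectrum_a_factor_and_octahedron (α₁ α₂ α₃ : ℝ) :
    spectrum ℂ ((α₁ : ℂ) • fano 0 + (α₂ : ℂ) • fano 3 + (α₃ : ℂ) • fano 6) =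
      {(-(I / 2)) * (α₁ + α₂ + α₃), (I / 2) * (α₁ + α₂ - α₃),
        (I / 2) * (α₁ - α₂ + α₃), (I / 2) * (-α₁ + α₂ + α₃)} ∧
    ((∀ z ∈ spectrum ℂ ((α₁ : ℂ) • fano 0 + (α₂ : ℂ) • fano 3 + (α₃ : ℂ) • fano 6),
        |z.im| < Real.pi) ↔
      (|α₁ + α₂ + α₃| < 2 * Real.pi ∧ |α₁ + α₂ - α₃| < 2 * Real.pi ∧
       |α₁ - α₂ + α₃| < 2 * Real.pi ∧ |-α₁ + α₂ + α₃| < 2 * Real.pi)) := by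
  have hspec := spectrum_fano_combination α₁ α₂ α₃
  refine ⟨hspec, ?_⟩
  rw [hspec]
  simp [inv_mul_lt_iff₀ (two_pos : (0 : ℝ) < 2)]
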